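/- arXiv:2406.09375 — 2 statements merged into one kernel-verified Lean document; each statement's English description precedes it below -/
import Mathlib

section
/- Let p ∈ [0,1] and let M ≥ 1 and d ≥ 1 be integers. Then ∑_{m=1}^{M} C(M,m) p^m (1-p)^{M-m} m^{-1/d} ≤ ((M+1)p)^{-1/d} + ((M+1)p)^{-1}. -/
open Finset

private lemma aux_pointwise (d : ℕ) (hd : 1 ≤ d) (m : ℕ) (hm : 1 ≤ m) :
    (m : ℝ) ^ (-(1 / (d : ℝ))) ≤ ((m : ℝ) + 1) ^ (-(1 / (d : ℝ))) + ((m : ℝ) + 1)⁻¹ := by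
  have hd0 : (0:ℝ) < d := by exact_mod_cast hd
  have hd1 : (1:ℝ) ≤ d := by exact_mod_cast hd
  set t : ℝ := 1 / (d : ℝ) with htdef
  have ht0 : 0 < t := by positivity
  have ht1 : t ≤ 1 := by
    rw [htdef]
    exact div_le_one_of_le₀ hd1 hd0.le
  rcases eq_or_lt_of_le hm with h1 | h2
  · -- m = 1
    have hmm : (m:ℝ) = 1 := by exact_mod_cast h1.symm
    rw [hmm, Real.one_rpow]
    have h2t : (2:ℝ)^(-(1:ℝ)) ≤ (2:ℝ)^(-t) :=
      Real.rpow_le_rpow_of_exponent_le one_le_two (by linarith)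
    rw [Real.rpow_neg_one] at h2t
    norm_num at h2t ⊢
    linarith
  · -- 2 ≤ m
    have hm2 : (2:ℝ) ≤ (m:ℝ) := by exact_mod_cast h2
    have hx0 : (0:ℝ) < m := by linarith
    have hx10 : (0:ℝ) < (m:ℝ) + 1 := by linarith
    rcases eq_or_lt_of_le hd with hd1' | hd2
    · -- d = 1
      have htt : t = 1 := by rw [htdef, ← hd1']; norm_num
      rw [htt]
      rw [show -(1:ℝ) = (-1 : ℝ) by norm_num, Real.rpow_neg_one, Real.rpow_neg_one]
      rw [inv_eq_one_div, inv_eq_one_div, ← add_div, div_le_div_iff₀ hx0 hx10]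
      nlinarith
    · -- 2 ≤ d, so t ≤ 1/2
      have hd2' : (2:ℝ) ≤ (d:ℝ) := by exact_mod_cast hd2
      have ht12 : t ≤ 1/2 := by
        rw [htdef]
        exact one_div_le_one_div_of_le (by norm_num) hd2'
      set x : ℝ := (m:ℝ) with hxdef
      have hb : ((1:ℝ) + 1/x) ^ t ≤ 1 + t * (1/x) :=
        rpow_one_add_le_one_add_mul_self (by nlinarith [one_div_nonneg.mpr hx0.le]) ht0.le ht1
      have hid : x^(-t) = ((1:ℝ) + 1/x)^t * (x+1)^(-t) := by
        have h1 : (1:ℝ) + 1/x = (x+1)/x := by field_simp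
        have hp1 : (0:ℝ) < (x+1)^t := Real.rpow_pos_of_pos hx10 t
        have hp2 : (0:ℝ) < x^t := Real.rpow_pos_of_pos hx0 t
        rw [h1, Real.div_rpow hx10.le hx0.le, Real.rpow_neg hx0.le, Real.rpow_neg hx10.le]
        field_simp
      have hle1 : (x+1)^(-t) ≤ 1 :=
        Real.rpow_le_one_of_one_le_of_nonpos (by linarith) (by linarith)
      have hpos : (0:ℝ) ≤ (x+1)^(-t) := (Real.rpow_pos_of_pos hx10 _).le
      have hstep : x^(-t) ≤ (x+1)^(-t) + t/x := by
        calc x^(-t) = ((1:ℝ) + 1/x)^t * (x+1)^(-t) := hid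
          _ ≤ (1 + t * (1/x)) * (x+1)^(-t) := mul_le_mul_of_nonneg_right hb hpos
          _ = (x+1)^(-t) + (t/x) * (x+1)^(-t) := by ring
          _ ≤ (x+1)^(-t) + t/x := by
              have : (t/x) * (x+1)^(-t) ≤ (t/x) * 1 :=
                mul_le_mul_of_nonneg_left hle1 (by positivity)
              linarith
      have hfin : t/x ≤ (x+1)⁻¹ := by
        rw [inv_eq_one_div, div_le_div_iff₀ hx0 hx10]
        nlinarith
      linarith

theorem binomial_sum_rpow_bound (p : ℝ) (hp0 : 0 < p) (hp1 : p ≤ 1)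
    (M d : ℕ) (hM : 1 ≤ M) (hd : 1 ≤ d) :
    ∑ m ∈ Finset.Icc 1 M,
        (M.choose m : ℝ) * p ^ m * (1 - p) ^ (M - m) * (m : ℝ) ^ (-(1 / (d : ℝ)))
      ≤ (((M : ℝ) + 1) * p) ^ (-(1 / (d : ℝ))) + (((M : ℝ) + 1) * p)⁻¹ := by
  have hq : (0:ℝ) ≤ 1 - p := by linarith
  set t : ℝ := 1 / (d : ℝ) with htdef
  have hd0 : (0:ℝ) < d := by exact_mod_cast hd
  have ht0 : 0 < t := by positivity
  set w : ℕ → ℝ := fun m => (M.choose m : ℝ) * p ^ m * (1 - p) ^ (M - m) with hwdef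
  have hwnn : ∀ m, 0 ≤ w m := fun m =>
    mul_nonneg (mul_nonneg (by positivity) (by positivity)) (pow_nonneg hq _)
  have hc : (0:ℝ) < ((M:ℝ) + 1) * p := by positivity
  -- weights sum to 1
  have hsum : ∑ m ∈ range (M+1), w m = 1 := by
    have h := add_pow p (1 - p) M
    have h2 : p + (1 - p) = 1 := by ring
    rw [h2, one_pow] at h
    calc ∑ m ∈ range (M+1), w m
        = ∑ k ∈ range (M+1), p ^ k * (1-p) ^ (M-k) * (M.choose k : ℝ) := by
          apply sum_congr rfl; intro k _; simp only [hwdef]; ring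
      _ = 1 := h.symm
  -- binomial identity bound
  have hB : ∑ m ∈ range (M+1), w m * ((m:ℝ)+1)⁻¹ ≤ (((M:ℝ)+1)*p)⁻¹ := by
    rw [inv_eq_one_div, le_div_iff₀ hc]
    have hterm : ∀ m : ℕ, w m * ((m:ℝ)+1)⁻¹ * (((M:ℝ)+1)*p)
        = ((M+1).choose (m+1) : ℝ) * p ^ (m+1) * (1-p) ^ ((M+1)-(m+1)) := by
      intro m
      have hm1 : ((m:ℝ)+1) ≠ 0 := by positivity
      have hch : ((M:ℝ)+1) * (M.choose m : ℝ) = ((M+1).choose (m+1) : ℝ) * ((m:ℝ)+1) := by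
        have hnat : (M+1) * M.choose m = (M+1).choose (m+1) * (m+1) :=
          Nat.add_one_mul_choose_eq M m
        have hcast : (((M+1) * M.choose m : ℕ) : ℝ)
            = (((M+1).choose (m+1) * (m+1) : ℕ) : ℝ) := by exact_mod_cast hnat
        push_cast at hcast
        linarith [hcast]
      rw [Nat.succ_sub_succ]
      simp only [hwdef]
      have : p ^ (m+1) = p ^ m * p := pow_succ p m
      field_simp
      linear_combination (p ^ m * p * (1-p) ^ (M-m)) * hch
    rw [sum_mul]
    calc ∑ m ∈ range (M+1), w m * ((m:ℝ)+1)⁻¹ * (((M:ℝ)+1)*p)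
        = ∑ m ∈ range (M+1),
            ((M+1).choose (m+1) : ℝ) * p ^ (m+1) * (1-p) ^ ((M+1)-(m+1)) :=
          sum_congr rfl (fun m _ => hterm m)
      _ ≤ 1 := by
          set g : ℕ → ℝ := fun k => ((M+1).choose k : ℝ) * p ^ k * (1-p) ^ ((M+1)-k)
            with hgdef
          have hgsum : ∑ k ∈ range (M+2), g k = 1 := by
            have h := add_pow p (1 - p) (M+1)
            have h2 : p + (1 - p) = 1 := by ring
            rw [h2, one_pow] at h
            calc ∑ k ∈ range (M+2), g k
                = ∑ k ∈ range (M+1+1), p ^ k * (1-p) ^ ((M+1)-k) * ((M+1).choose k : ℝ) := by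
                  apply sum_congr rfl; intro k _; simp only [hgdef]; ring
              _ = 1 := h.symm
          have hs := Finset.sum_range_succ' g (M+1)
          have hg0 : 0 ≤ g 0 := by
            simp only [hgdef]
            positivity
          calc ∑ m ∈ range (M+1),
                ((M+1).choose (m+1) : ℝ) * p ^ (m+1) * (1-p) ^ ((M+1)-(m+1))
              = ∑ m ∈ range (M+1), g (m+1) := rfl
            _ ≤ ∑ m ∈ range (M+1), g (m+1) + g 0 := le_add_of_nonneg_right hg0
            _ = ∑ k ∈ range (M+2), g k := hs.symm
            _ = 1 := hgsum
  -- Jensen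
  have hz : ∀ i : ℕ, ((((i:ℝ)+1)⁻¹) ^ t) ^ (d:ℝ) = ((i:ℝ)+1)⁻¹ := by
    intro i
    rw [← Real.rpow_mul (by positivity), htdef, one_div_mul_cancel hd0.ne', Real.rpow_one]
  have hJ : ∑ m ∈ range (M+1), w m * (((m:ℝ)+1)⁻¹) ^ t
      ≤ (∑ m ∈ range (M+1), w m * ((m:ℝ)+1)⁻¹) ^ t := by
    have hj := Real.arith_mean_le_rpow_mean (range (M+1)) w
      (fun m => (((m:ℝ)+1)⁻¹) ^ t) (fun i _ => hwnn i) hsum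
      (fun i _ => Real.rpow_nonneg (by positivity) t) (p := (d:ℝ)) (by exact_mod_cast hd)
    calc ∑ m ∈ range (M+1), w m * (((m:ℝ)+1)⁻¹) ^ t
        ≤ (∑ m ∈ range (M+1), w m * ((((m:ℝ)+1)⁻¹) ^ t) ^ (d:ℝ)) ^ (1/(d:ℝ)) := hj
      _ = (∑ m ∈ range (M+1), w m * ((m:ℝ)+1)⁻¹) ^ t := by
          rw [← htdef]
          congr 1
          exact sum_congr rfl (fun m _ => by rw [hz m])
  have hsub : Finset.Icc 1 M ⊆ range (M+1) := fun m hm' => by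
    rw [mem_Icc] at hm'; rw [mem_range]; omega
  have hA : ∑ m ∈ Finset.Icc 1 M, w m * (m:ℝ) ^ (-t)
      ≤ ∑ m ∈ Finset.Icc 1 M, (w m * (((m:ℝ)+1)⁻¹) ^ t + w m * ((m:ℝ)+1)⁻¹) := by
    apply sum_le_sum
    intro i hi
    rw [mem_Icc] at hi
    have haux := aux_pointwise d hd i hi.1
    rw [← htdef] at haux
    have hrw : (((i:ℝ)+1)⁻¹) ^ t = ((i:ℝ)+1) ^ (-t) := by
      rw [Real.inv_rpow (by positivity), ← Real.rpow_neg (by positivity)]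
    rw [← mul_add, hrw]
    exact mul_le_mul_of_nonneg_left haux (hwnn i)
  calc ∑ m ∈ Finset.Icc 1 M,
        (M.choose m : ℝ) * p ^ m * (1 - p) ^ (M - m) * (m : ℝ) ^ (-t)
      = ∑ m ∈ Finset.Icc 1 M, w m * (m:ℝ) ^ (-t) :=
        sum_congr rfl (fun m _ => by simp only [hwdef])
    _ ≤ ∑ m ∈ Finset.Icc 1 M, (w m * (((m:ℝ)+1)⁻¹) ^ t + w m * ((m:ℝ)+1)⁻¹) := hA
    _ = (∑ m ∈ Finset.Icc 1 M, w m * (((m:ℝ)+1)⁻¹) ^ t)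
        + ∑ m ∈ Finset.Icc 1 M, w m * ((m:ℝ)+1)⁻¹ := sum_add_distrib
    _ ≤ (∑ m ∈ range (M+1), w m * (((m:ℝ)+1)⁻¹) ^ t)
        + ∑ m ∈ range (M+1), w m * ((m:ℝ)+1)⁻¹ := by
        apply add_le_add
        · exact sum_le_sum_of_subset_of_nonneg hsub
            (fun i _ _ => mul_nonneg (hwnn i) (Real.rpow_nonneg (by positivity) _))
        · exact sum_le_sum_of_subset_of_nonneg hsub
            (fun i _ _ => mul_nonneg (hwnn i) (by positivity))
    _ ≤ (∑ m ∈ range (M+1), w m * ((m:ℝ)+1)⁻¹) ^ t + (((M:ℝ)+1)*p)⁻¹ :=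
        add_le_add hJ hB
    _ ≤ ((((M:ℝ)+1)*p)⁻¹) ^ t + (((M:ℝ)+1)*p)⁻¹ := by
        apply add_le_add_left
        exact Real.rpow_le_rpow
          (sum_nonneg (fun i _ => mul_nonneg (hwnn i) (by positivity))) hB ht0.le
    _ = (((M:ℝ)+1)*p) ^ (-t) + (((M:ℝ)+1)*p)⁻¹ := by
        rw [Real.inv_rpow hc.le, ← Real.rpow_neg hc.le]
end

section
/- Let n ≥ 1 be an integer and q ∈ (0,1]. Then ∑_{ℓ=0}^{n-1} C(n-1,ℓ) q^ℓ (1-q)^{n-1-ℓ} (1+ℓ)^{-2} ≤ 2/(n(n+1)q^2). -/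
open Finset

theorem binomial_inv_sq_one_add_bound (n : ℕ) (hn : 1 ≤ n) (q : ℝ) (hq0 : 0 < q) (hq1 : q ≤ 1) :
    ∑ ℓ ∈ Finset.range n,
        ((n - 1).choose ℓ : ℝ) * q ^ ℓ * (1 - q) ^ (n - 1 - ℓ) * ((1 + (ℓ : ℝ)) ^ 2)⁻¹
      ≤ 2 / ((n : ℝ) * ((n : ℝ) + 1) * q ^ 2) := by
  have hq' : (0:ℝ) ≤ 1 - q := by linarith
  have hn0 : (0:ℝ) < n := by exact_mod_cast hn
  set c : ℝ := 2 / ((n : ℝ) * ((n : ℝ) + 1) * q ^ 2) with hc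
  have hc0 : 0 ≤ c := by positivity
  set f : ℕ → ℝ := fun k => ((n+1).choose k : ℝ) * q ^ k * (1 - q) ^ (n + 1 - k) with hfdef
  have hf : ∀ k, 0 ≤ f k := fun k => by positivity
  have h1 : ∑ ℓ ∈ Finset.range n,
      ((n - 1).choose ℓ : ℝ) * q ^ ℓ * (1 - q) ^ (n - 1 - ℓ) * ((1 + (ℓ : ℝ)) ^ 2)⁻¹
      ≤ ∑ ℓ ∈ Finset.range n, c * f (ℓ + 2) := by
    apply Finset.sum_le_sum
    intro ℓ hℓ
    have hℓn : ℓ + 1 ≤ n := Finset.mem_range.mp hℓ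
    have k1 : (n+1) * (n.choose (ℓ+1)) = (n+1).choose (ℓ+2) * (ℓ+2) :=
      Nat.add_one_mul_choose_eq n (ℓ+1)
    have k2 : n * ((n-1).choose ℓ) = n.choose (ℓ+1) * (ℓ+1) := by
      have h := Nat.add_one_mul_choose_eq (n-1) ℓ
      have hn1 : n - 1 + 1 = n := by omega
      rw [hn1] at h
      exact h
    have knat : (n+1).choose (ℓ+2) * ((ℓ+2)*(ℓ+1)) = (n+1) * n * ((n-1).choose ℓ) := by
      rw [← mul_assoc, ← k1, mul_assoc, ← k2]; ring
    have keyR : ((n+1).choose (ℓ+2) : ℝ) * (((ℓ:ℝ)+2)*((ℓ:ℝ)+1))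
        = ((n:ℝ)+1)*(n:ℝ)*((n-1).choose ℓ : ℝ) := by exact_mod_cast knat
    have he : n + 1 - (ℓ + 2) = n - 1 - ℓ := by omega
    have heq : c * f (ℓ + 2)
        = (2/((((ℓ:ℝ)+2)*((ℓ:ℝ)+1)))) * (((n - 1).choose ℓ : ℝ) * q ^ ℓ * (1 - q) ^ (n - 1 - ℓ)) := by
      rw [hfdef]
      simp only []
      rw [he, hc, pow_add]
      rw [div_mul_eq_mul_div, div_mul_eq_mul_div, div_eq_div_iff (by positivity) (by positivity)]
      linear_combination (2 * q ^ ℓ * q ^ 2 * (1 - q) ^ (n - 1 - ℓ)) * keyR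
    have hineq : ((1+(ℓ:ℝ))^2)⁻¹ ≤ 2/(((ℓ:ℝ)+2)*((ℓ:ℝ)+1)) := by
      rw [inv_eq_one_div, div_le_div_iff₀ (by positivity) (by positivity)]
      nlinarith [sq_nonneg ((ℓ:ℝ))]
    calc ((n - 1).choose ℓ : ℝ) * q ^ ℓ * (1 - q) ^ (n - 1 - ℓ) * ((1 + (ℓ : ℝ)) ^ 2)⁻¹
        = ((1 + (ℓ : ℝ)) ^ 2)⁻¹ * (((n - 1).choose ℓ : ℝ) * q ^ ℓ * (1 - q) ^ (n - 1 - ℓ)) := by ring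
      _ ≤ (2/((((ℓ:ℝ)+2)*((ℓ:ℝ)+1)))) * (((n - 1).choose ℓ : ℝ) * q ^ ℓ * (1 - q) ^ (n - 1 - ℓ)) := by
          apply mul_le_mul_of_nonneg_right hineq (by positivity)
      _ = c * f (ℓ + 2) := heq.symm
  have hbin : ∑ k ∈ Finset.range (n+2), f k = 1 := by
    calc ∑ k ∈ Finset.range (n+2), f k
        = ∑ m ∈ Finset.range (n+1+1), q ^ m * (1-q) ^ (n+1-m) * ((n+1).choose m : ℝ) := by
          apply Finset.sum_congr rfl; intro k _; rw [hfdef]; ring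
      _ = (q + (1-q)) ^ (n+1) := (add_pow q (1-q) (n+1)).symm
      _ = 1 := by norm_num
  have hsum : ∑ ℓ ∈ Finset.range n, f (ℓ + 2) ≤ 1 := by
    rw [Finset.sum_range_succ', Finset.sum_range_succ'] at hbin
    have : ∑ i ∈ Finset.range n, f (i + 1 + 1) = ∑ i ∈ Finset.range n, f (i + 2) := by
      apply Finset.sum_congr rfl; intro i _; norm_num
    rw [this] at hbin
    have h0 := hf 0
    have h1' := hf (0+1)
    linarith
  calc ∑ ℓ ∈ Finset.range n,
        ((n - 1).choose ℓ : ℝ) * q ^ ℓ * (1 - q) ^ (n - 1 - ℓ) * ((1 + (ℓ : ℝ)) ^ 2)⁻¹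
      ≤ ∑ ℓ ∈ Finset.range n, c * f (ℓ + 2) := h1
    _ = c * ∑ ℓ ∈ Finset.range n, f (ℓ + 2) := by rw [Finset.mul_sum]
    _ ≤ c * 1 := mul_le_mul_of_nonneg_left hsum hc0
    _ = c := mul_one c
end
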